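/- Let Y ∈ 𝓢^q be irreducible and let s ≥ 1. Then the pair (M_{Δ^s Y}, Δ^s Y) is permutation isomorphic to the pair (M_Y, Y): there exist a group isomorphism φ : M_Y → M_{Δ^s Y} and a bijection τ : Y → Δ^s Y (given by y ↦ y y^{g_2} ⋯ y^{g_s}) such that τ(y^m) = τ(y)^{φ(m)} for all y ∈ Y and m ∈ M_Y. -/

import Mathlib

open Equiv Pointwise

namespace FPS

/-- The support of a permutation of `ℕ`. -/
def psupp (ρ : Equiv.Perm ℕ) : Set ℕ := {ω | ρ ω ≠ ω}

/-- The support of a set of permutations of `ℕ`. -/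
def ssupp (X : Set (Equiv.Perm ℕ)) : Set ℕ := ⋃ ρ ∈ X, psupp ρ

/-- `Sym(α)`: the subgroup of permutations of `ℕ` supported on the subset `α`. -/
def symOn (α : Set ℕ) : Subgroup (Equiv.Perm ℕ) where
  carrier := {g | ∀ ω, ω ∉ α → g ω = ω}
  one_mem' := fun _ _ => rfl
  mul_mem' := by
    intro a b ha hb ω hω
    have hbω := hb ω hω
    have haω := ha ω hω
    show a (b ω) = ω
    rw [hbω, haω]
  inv_mem' := by
    intro a ha ω hω
    have haω := ha ω hω
    show a⁻¹ ω = ω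
    nth_rewrite 1 [← haω]
    exact Equiv.symm_apply_apply a ω

/-- Membership in the family `𝓕`: finite nonempty sets of finitary permutations,
different from `{1}`. -/
def memF (X : Set (Equiv.Perm ℕ)) : Prop :=
  X.Finite ∧ X.Nonempty ∧ X ≠ {1} ∧ ∀ ρ ∈ X, (psupp ρ).Finite

/-- Membership in `𝓢^q`: members of `𝓕` all of whose elements are products of `q`-cycles
(each orbit on the support has size `q`) with full support. -/
def memS (q : ℕ) (X : Set (Equiv.Perm ℕ)) : Prop :=
  memF X ∧ (∀ ρ ∈ X, psupp ρ = ssupp X) ∧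
    ∀ ρ ∈ X, ∀ ω ∈ psupp ρ, (Set.range fun n : ℤ => (ρ ^ n) ω).ncard = q

/-- Right conjugation `x ↦ x^g = g⁻¹ x g`. -/
def conjR (g x : Equiv.Perm ℕ) : Equiv.Perm ℕ := g⁻¹ * x * g

/-- Conjugate of a set of permutations: `X^g`. -/
def conjSet (g : Equiv.Perm ℕ) (X : Set (Equiv.Perm ℕ)) : Set (Equiv.Perm ℕ) := conjR g '' X

/-- The setwise stabilizer (under conjugation) of a set of permutations,
as a subgroup of the full group `Sym(ℕ)`. -/
def setStab (X : Set (Equiv.Perm ℕ)) : Subgroup (Equiv.Perm ℕ) where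
  carrier := {g | ∀ x, x ∈ X ↔ g⁻¹ * x * g ∈ X}
  one_mem' := by
    intro x
    simp
  mul_mem' := by
    intro a b ha hb x
    have h1 := ha x
    have h2 := hb (a⁻¹ * x * a)
    have e : b⁻¹ * (a⁻¹ * x * a) * b = (a * b)⁻¹ * x * (a * b) := by group
    rw [e] at h2
    exact h1.trans h2
  inv_mem' := by
    intro a ha x
    have h := ha (a * x * a⁻¹)
    have e : a⁻¹ * (a * x * a⁻¹) * a = x := by group
    rw [e] at h
    have e2 : a * x * a⁻¹ = a⁻¹⁻¹ * x * a⁻¹ := by group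
    rw [e2] at h
    exact h.symm

/-- `N_X`: the stabilizer of `X` in `G_X = Sym(supp X)`. -/
def NX (X : Set (Equiv.Perm ℕ)) : Subgroup (Equiv.Perm ℕ) := symOn (ssupp X) ⊓ setStab X

/-- `S_X = C_{G_X}(X)`: the pointwise centralizer of `X` in `G_X = Sym(supp X)`. -/
def SX (X : Set (Equiv.Perm ℕ)) : Subgroup (Equiv.Perm ℕ) :=
  symOn (ssupp X) ⊓ Subgroup.centralizer X

/-- `Q` is a Sylow `p`-subgroup of the subgroup `H` (that is, a maximal `p`-subgroup of `H`). -/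
def IsSylowOf {G : Type*} [Group G] (p : ℕ) (Q H : Subgroup G) : Prop :=
  Q ≤ H ∧ IsPGroup p Q ∧ ∀ R : Subgroup G, R ≤ H → IsPGroup p R → Q ≤ R → R = Q

/-- `Ξ_X = ⋃_{g ∈ G_X} X^g`. -/
def Xi (X : Set (Equiv.Perm ℕ)) : Set (Equiv.Perm ℕ) :=
  ⋃ g ∈ (symOn (ssupp X) : Set (Equiv.Perm ℕ)), conjSet g X

/-- `X` is closed: `C_{G_X}(Q_X) ∩ Ξ_X = X` for (any) Sylow `p`-subgroup `Q_X` of `S_X`. -/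
def IsClosedSet (p : ℕ) (X : Set (Equiv.Perm ℕ)) : Prop :=
  ∀ Q : Subgroup (Equiv.Perm ℕ), IsSylowOf p Q (SX X) →
    (Subgroup.centralizer (Q : Set (Equiv.Perm ℕ)) : Set (Equiv.Perm ℕ)) ∩ Xi X = X

/-- `X` is exact: `supp Q_X = supp X` for (any) Sylow `p`-subgroup `Q_X` of `S_X`. -/
def IsExactSet (p : ℕ) (X : Set (Equiv.Perm ℕ)) : Prop :=
  ∀ Q : Subgroup (Equiv.Perm ℕ), IsSylowOf p Q (SX X) →
    ssupp (Q : Set (Equiv.Perm ℕ)) = ssupp X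

/-- `X` is projective: `Q_X = 1`. -/
def IsProjectiveSet (p : ℕ) (X : Set (Equiv.Perm ℕ)) : Prop :=
  ∀ Q : Subgroup (Equiv.Perm ℕ), IsSylowOf p Q (SX X) → Q = ⊥

/-- `X ∈ 𝓕` is irreducible if it is not a product of two members of `𝓕`
with disjoint supports. -/
def IsIrred (X : Set (Equiv.Perm ℕ)) : Prop :=
  memF X ∧ ∀ Y Z : Set (Equiv.Perm ℕ), memF Y → memF Z →
    Disjoint (ssupp Y) (ssupp Z) → X ≠ Y * Z

/-- Two sets of permutations are equivalent if they are conjugate in `Sym(ℕ)`. -/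
def EquivSet (X Y : Set (Equiv.Perm ℕ)) : Prop := ∃ g : Equiv.Perm ℕ, conjSet g X = Y

/-- `D` is a realization of `Δ^s X`: the diagonal of a product of `s` disjointly
supported conjugates of `X`. -/
def IsDelta (s : ℕ) (X D : Set (Equiv.Perm ℕ)) : Prop :=
  ∃ g : Fin s → Equiv.Perm ℕ,
    (∀ i j, i ≠ j → Disjoint (ssupp (conjSet (g i) X)) (ssupp (conjSet (g j) X))) ∧
    D = (fun x => (List.ofFn fun i => conjR (g i) x).prod) '' X

/-- `D` is a realization of the `a`-fold `*`-power `X^a`: a product of `a` disjointly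
supported conjugates of `X`. -/
def IsStarPow (a : ℕ) (X D : Set (Equiv.Perm ℕ)) : Prop :=
  ∃ g : Fin a → Equiv.Perm ℕ,
    (∀ i j, i ≠ j → Disjoint (ssupp (conjSet (g i) X)) (ssupp (conjSet (g j) X))) ∧
    D = (List.ofFn fun i => conjSet (g i) X).prod

/-- `X` is a transitive set: `⟨X⟩` is transitive on `supp X`. -/
def TransitiveSet (X : Set (Equiv.Perm ℕ)) : Prop :=
  ∀ a ∈ ssupp X, ∀ b ∈ ssupp X, ∃ g ∈ Subgroup.closure X, g a = b

lemma mem_setStab {X : Set (Equiv.Perm ℕ)} {g : Equiv.Perm ℕ} :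
    g ∈ setStab X ↔ ∀ x, x ∈ X ↔ g⁻¹ * x * g ∈ X := Iff.rfl

lemma conjR_mem {X : Set (Equiv.Perm ℕ)} {g : Equiv.Perm ℕ} (hg : g ∈ setStab X)
    {x : Equiv.Perm ℕ} (hx : x ∈ X) : g⁻¹ * x * g ∈ X :=
  (mem_setStab.mp hg x).mp hx

lemma conjL_mem {X : Set (Equiv.Perm ℕ)} {g : Equiv.Perm ℕ} (hg : g ∈ setStab X)
    {x : Equiv.Perm ℕ} (hx : x ∈ X) : g * x * g⁻¹ ∈ X := by
  have h := mem_setStab.mp ((setStab X).inv_mem hg) x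
  rw [inv_inv] at h
  exact h.mp hx

/-- The permutation of `X` induced by conjugation by an element of `N_X`. -/
def conjPerm (X : Set (Equiv.Perm ℕ)) (g : NX X) : Equiv.Perm X where
  toFun x := ⟨(g : Equiv.Perm ℕ) * x * (g : Equiv.Perm ℕ)⁻¹,
    conjL_mem (Subgroup.mem_inf.mp g.2).2 x.2⟩
  invFun x := ⟨(g : Equiv.Perm ℕ)⁻¹ * x * (g : Equiv.Perm ℕ),
    conjR_mem (Subgroup.mem_inf.mp g.2).2 x.2⟩
  left_inv x := by
    apply Subtype.ext
    show (g : Equiv.Perm ℕ)⁻¹ * ((g : Equiv.Perm ℕ) * x * (g : Equiv.Perm ℕ)⁻¹) *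
      (g : Equiv.Perm ℕ) = x
    group
  right_inv x := by
    apply Subtype.ext
    show (g : Equiv.Perm ℕ) * ((g : Equiv.Perm ℕ)⁻¹ * x * (g : Equiv.Perm ℕ)) *
      (g : Equiv.Perm ℕ)⁻¹ = x
    group

/-- The action of `N_X` on `X` by conjugation, as a homomorphism `N_X →* Sym(X)`. -/
def MXhom (X : Set (Equiv.Perm ℕ)) : NX X →* Equiv.Perm X where
  toFun := conjPerm X
  map_one' := by
    apply Equiv.ext
    intro x
    apply Subtype.ext
    show ((1 : NX X) : Equiv.Perm ℕ) * x * ((1 : NX X) : Equiv.Perm ℕ)⁻¹ = x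
    simp
  map_mul' a b := by
    apply Equiv.ext
    intro x
    apply Subtype.ext
    show ((a * b : NX X) : Equiv.Perm ℕ) * x * ((a * b : NX X) : Equiv.Perm ℕ)⁻¹
      = (a : Equiv.Perm ℕ) * ((b : Equiv.Perm ℕ) * x * (b : Equiv.Perm ℕ)⁻¹) *
        (a : Equiv.Perm ℕ)⁻¹
    push_cast
    group

/-- `M_X = N_X/S_X`, realized as the image of `N_X` in `Sym(X)` (the action of `N_X`
on `X` is by conjugation, with kernel `S_X`). -/
def MX (X : Set (Equiv.Perm ℕ)) : Subgroup (Equiv.Perm X) := (MXhom X).range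

/-- The permutation module `k[Ω]` of the `G`-set `Ω` has a nonzero projective direct summand. -/
def HasProjSummand (k : Type) [Field k] (G : Type*) [Group G] (Ω : Type*) [MulAction G Ω] :
    Prop :=
  ∃ P W : Submodule (MonoidAlgebra k G) (Representation.ofMulAction k G Ω).asModule,
    IsCompl P W ∧ P ≠ ⊥ ∧ Module.Projective (MonoidAlgebra k G) P

/-- `X` is a fixed point set: `X ∈ 𝓢^q`, `X` is closed, and the permutation
`k M_X`-module `k[X]` has a nonzero projective direct summand. -/
def IsFPS (p q : ℕ) (k : Type) [Field k] (X : Set (Equiv.Perm ℕ)) : Prop :=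
  memS q X ∧ IsClosedSet p X ∧ HasProjSummand k (MX X) X

/-- `X` and `Y` (with disjoint supports) are coprime: `N_{X*Y} = N_X × N_Y`. -/
def CoprimeSets (X Y : Set (Equiv.Perm ℕ)) : Prop := NX (X * Y) = NX X ⊔ NX Y

/-- `X` is projective-free: no factor in a decomposition of `X` into irreducibles
is projective. -/
def ProjFree (p : ℕ) (X : Set (Equiv.Perm ℕ)) : Prop :=
  ∀ L : List (Set (Equiv.Perm ℕ)), (∀ Y ∈ L, IsIrred Y) →
    L.Pairwise (fun A B => Disjoint (ssupp A) (ssupp B)) →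
    X = L.prod → ∀ Y ∈ L, ¬ IsProjectiveSet p Y



/-! ### Auxiliary material for `stmt_5` -/

section Aux

open Equiv

theorem Perm.inv_apply_self {α : Type*} (f : Perm α) (x : α) : f⁻¹ (f x) = x :=
  f.symm_apply_apply x

theorem Perm.apply_inv_self {α : Type*} (f : Perm α) (x : α) : f (f⁻¹ x) = x :=
  f.apply_symm_apply x

lemma mem_psupp {f : Perm ℕ} {ω : ℕ} : ω ∈ psupp f ↔ f ω ≠ ω := Iff.rfl

lemma fix_of_not_mem_psupp {f : Perm ℕ} {ω : ℕ} (h : ω ∉ psupp f) : f ω = ω :=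
  not_not.mp h

lemma apply_mem_psupp {f : Perm ℕ} {ω : ℕ} : f ω ∈ psupp f ↔ ω ∈ psupp f := by
  simp only [mem_psupp, ne_eq, EmbeddingLike.apply_eq_iff_eq]

lemma mapsTo_of_psupp_subset {f : Perm ℕ} {S : Set ℕ} (h : psupp f ⊆ S) {ω : ℕ}
    (hω : ω ∈ S) : f ω ∈ S := by
  by_cases hp : ω ∈ psupp f
  · exact h (apply_mem_psupp.mpr hp)
  · rw [fix_of_not_mem_psupp hp]; exact hω

lemma psupp_mul_subset (u v : Perm ℕ) : psupp (u * v) ⊆ psupp u ∪ psupp v := by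
  intro ω hω
  by_contra hc
  rw [Set.mem_union] at hc
  push_neg at hc
  have h1 := fix_of_not_mem_psupp hc.1
  have h2 := fix_of_not_mem_psupp hc.2
  exact hω (show (u * v) ω = ω by rw [Perm.mul_apply, h2, h1])

lemma psupp_inv (u : Perm ℕ) : psupp u⁻¹ = psupp u := by
  ext ω
  simp only [mem_psupp, ne_eq]
  constructor
  · intro h hc
    exact h (by rw [← hc, Perm.inv_apply_self]; exact hc.symm)
  · intro h hc
    exact h (by rw [← hc, Perm.apply_inv_self]; exact hc.symm)

lemma psupp_one : psupp (1 : Perm ℕ) = ∅ := by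
  ext ω; simp [psupp]

lemma mem_ssupp {X : Set (Perm ℕ)} {ω : ℕ} : ω ∈ ssupp X ↔ ∃ x ∈ X, ω ∈ psupp x := by
  simp [ssupp]

lemma psupp_subset_ssupp {X : Set (Perm ℕ)} {x : Perm ℕ} (hx : x ∈ X) :
    psupp x ⊆ ssupp X := fun ω hω => mem_ssupp.mpr ⟨x, hx, hω⟩

lemma conjR_apply (gg u : Perm ℕ) (ω : ℕ) : conjR gg u ω = gg⁻¹ (u (gg ω)) := rfl

lemma psupp_conjR (gg u : Perm ℕ) : psupp (conjR gg u) = {ω | gg ω ∈ psupp u} := by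
  ext ω
  simp only [mem_psupp, conjR_apply, Set.mem_setOf_eq, ne_eq]
  constructor
  · intro h hc
    exact h (by rw [hc]; simp)
  · intro h hc
    apply h
    have := congrArg gg hc
    simpa using this

lemma ssupp_conjSet (gg : Perm ℕ) (X : Set (Perm ℕ)) :
    ssupp (conjSet gg X) = {ω | gg ω ∈ ssupp X} := by
  ext ω
  simp only [Set.mem_setOf_eq, mem_ssupp]
  constructor
  · rintro ⟨z, ⟨x, hx, rfl⟩, hω⟩
    rw [psupp_conjR] at hω
    exact ⟨x, hx, hω⟩
  · rintro ⟨x, hx, hω⟩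
    exact ⟨conjR gg x, ⟨x, hx, rfl⟩, by rw [psupp_conjR]; exact hω⟩

lemma mem_symOn {S : Set ℕ} {f : Perm ℕ} : f ∈ symOn S ↔ ∀ ω, ω ∉ S → f ω = ω := Iff.rfl

lemma psupp_subset_of_mem_symOn {S : Set ℕ} {f : Perm ℕ} (h : f ∈ symOn S) :
    psupp f ⊆ S := by
  intro ω hω
  by_contra hc
  exact hω (h ω hc)

lemma mem_symOn_of_psupp_subset {S : Set ℕ} {f : Perm ℕ} (h : psupp f ⊆ S) :
    f ∈ symOn S := by
  intro ω hω
  by_contra hc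
  exact hω (h hc)

lemma listprod_apply_fix (l : List (Perm ℕ)) {ω : ℕ} (h : ∀ p ∈ l, p ω = ω) :
    l.prod ω = ω := by
  induction l with
  | nil => rfl
  | cons a t ih =>
    rw [List.prod_cons, Perm.mul_apply, ih (fun p hp => h p (List.mem_cons_of_mem a hp)),
      h a List.mem_cons_self]

lemma ofFn_prod_apply_mem {m : ℕ} (F : Fin m → Perm ℕ) (B : Fin m → Set ℕ)
    (hd : ∀ i j, i ≠ j → Disjoint (B i) (B j)) (hsupp : ∀ i, psupp (F i) ⊆ B i)
    {i : Fin m} {ω : ℕ} (hω : ω ∈ B i) :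
    (List.ofFn F).prod ω = F i ω := by
  induction m with
  | zero => exact i.elim0
  | succ m ih =>
    rw [List.ofFn_succ, List.prod_cons, Perm.mul_apply]
    have tailfix : ∀ {ζ : ℕ}, ζ ∈ B 0 → (List.ofFn fun j : Fin m => F j.succ).prod ζ = ζ := by
      intro ζ hζ
      apply listprod_apply_fix
      intro p hp
      rw [List.mem_ofFn] at hp
      obtain ⟨j, rfl⟩ := hp
      apply fix_of_not_mem_psupp
      intro hc
      exact Set.disjoint_left.mp (hd j.succ 0 (Fin.succ_ne_zero j)) (hsupp j.succ hc) hζ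
    rcases Fin.eq_zero_or_eq_succ i with rfl | ⟨j, rfl⟩
    · rw [tailfix hω]
    · have ht : (List.ofFn fun k : Fin m => F k.succ).prod ω = F j.succ ω :=
        ih (fun k => F k.succ) (fun k => B k.succ)
          (fun a b hab => hd a.succ b.succ (fun hc => hab (Fin.succ_injective m hc)))
          (fun k => hsupp k.succ) hω
      rw [ht]
      have hmem : F j.succ ω ∈ B j.succ := mapsTo_of_psupp_subset (hsupp j.succ) hω
      apply fix_of_not_mem_psupp
      intro hc
      exact Set.disjoint_left.mp (hd 0 j.succ (Fin.succ_ne_zero j).symm) (hsupp 0 hc) hmem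

end Aux


section PPsec

open Equiv

variable (Y : Set (Perm ℕ)) {s : ℕ} (g : Fin s → Perm ℕ)

/-- The `i`-th region: support of the `i`-th conjugate copy of `Y`. -/
def AR (i : Fin s) : Set ℕ := {ω | g i ω ∈ ssupp Y}

/-- The diagonal product map. -/
def PP (u : Perm ℕ) : Perm ℕ := (List.ofFn fun i => conjR (g i) u).prod

lemma AR_eq_ssupp_conjSet (i : Fin s) : AR Y g i = ssupp (conjSet (g i) Y) := by
  rw [ssupp_conjSet]; rfl

lemma mem_AR {i : Fin s} {ω : ℕ} : ω ∈ AR Y g i ↔ g i ω ∈ ssupp Y := Iff.rfl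

lemma psupp_conjR_subset_AR {u : Perm ℕ} (hu : psupp u ⊆ ssupp Y) (i : Fin s) :
    psupp (conjR (g i) u) ⊆ AR Y g i := by
  rw [psupp_conjR]
  intro ω hω
  exact hu hω

lemma PP_apply_fix {u : Perm ℕ} (hu : psupp u ⊆ ssupp Y) {ω : ℕ}
    (hω : ∀ i, ω ∉ AR Y g i) : PP g u ω = ω := by
  apply listprod_apply_fix
  intro p hp
  rw [List.mem_ofFn] at hp
  obtain ⟨i, rfl⟩ := hp
  exact fix_of_not_mem_psupp fun hc => hω i (psupp_conjR_subset_AR Y g hu i hc)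

lemma psupp_PP_subset {u : Perm ℕ} (hu : psupp u ⊆ ssupp Y) :
    psupp (PP g u) ⊆ ⋃ i, AR Y g i := by
  intro ω hω
  by_contra hc
  rw [Set.mem_iUnion] at hc
  push_neg at hc
  exact hω (PP_apply_fix Y g hu hc)


variable (hd : ∀ i j : Fin s, i ≠ j → Disjoint (AR Y g i) (AR Y g j))

include hd

lemma AR_unique {i j : Fin s} {ω : ℕ} (hi : ω ∈ AR Y g i) (hj : ω ∈ AR Y g j) : i = j := by
  by_contra hc
  exact Set.disjoint_left.mp (hd i j hc) hi hj

lemma PP_apply_mem {u : Perm ℕ} (hu : psupp u ⊆ ssupp Y) {i : Fin s} {ω : ℕ}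
    (hω : ω ∈ AR Y g i) : PP g u ω = (g i)⁻¹ (u (g i ω)) :=
  ofFn_prod_apply_mem _ (AR Y g) hd (fun j => psupp_conjR_subset_AR Y g hu j) hω

lemma PP_mem_AR {u : Perm ℕ} (hu : psupp u ⊆ ssupp Y) {i : Fin s} {ω : ℕ}
    (hω : ω ∈ AR Y g i) : PP g u ω ∈ AR Y g i := by
  rw [PP_apply_mem Y g hd hu hω, mem_AR]
  rw [Perm.apply_inv_self]
  exact mapsTo_of_psupp_subset hu hω

lemma PP_mul {u v : Perm ℕ} (hu : psupp u ⊆ ssupp Y) (hv : psupp v ⊆ ssupp Y) :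
    PP g (u * v) = PP g u * PP g v := by
  have huv : psupp (u * v) ⊆ ssupp Y := (psupp_mul_subset u v).trans (by
    intro a ha; rcases ha with h | h; exacts [hu h, hv h])
  apply Equiv.ext
  intro ω
  by_cases hω : ∃ i, ω ∈ AR Y g i
  · obtain ⟨i, hi⟩ := hω
    have hvi : PP g v ω = (g i)⁻¹ (v (g i ω)) := PP_apply_mem Y g hd hv hi
    have hmemv : PP g v ω ∈ AR Y g i := PP_mem_AR Y g hd hv hi
    rw [Perm.mul_apply, PP_apply_mem Y g hd huv hi, PP_apply_mem Y g hd hu hmemv, hvi,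
      Perm.apply_inv_self, Perm.mul_apply]
  · push_neg at hω
    rw [Perm.mul_apply, PP_apply_fix Y g huv hω, PP_apply_fix Y g hv hω,
      PP_apply_fix Y g hu hω]

omit hd in
lemma PP_one : PP g 1 = 1 := by
  apply List.prod_eq_one
  intro p hp
  rw [List.mem_ofFn] at hp
  obtain ⟨i, rfl⟩ := hp
  show (g i)⁻¹ * 1 * g i = 1
  group

lemma PP_inv {u : Perm ℕ} (hu : psupp u ⊆ ssupp Y) : PP g u⁻¹ = (PP g u)⁻¹ := by
  have h1 : psupp u⁻¹ ⊆ ssupp Y := by rw [psupp_inv]; exact hu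
  have : PP g u⁻¹ * PP g u = 1 := by
    rw [← PP_mul Y g hd h1 hu, inv_mul_cancel, PP_one]
  exact eq_inv_of_mul_eq_one_left this

lemma PP_inj (hs : 1 ≤ s) {u v : Perm ℕ} (hu : psupp u ⊆ ssupp Y)
    (hv : psupp v ⊆ ssupp Y) (h : PP g u = PP g v) : u = v := by
  set i0 : Fin s := ⟨0, hs⟩
  have hc : conjR (g i0) u = conjR (g i0) v := by
    apply Equiv.ext
    intro ω
    by_cases hω : ω ∈ AR Y g i0
    · have h1 := PP_apply_mem Y g hd hu hω
      have h2 := PP_apply_mem Y g hd hv hω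
      rw [conjR_apply, conjR_apply, ← h1, ← h2, h]
    · rw [fix_of_not_mem_psupp (fun hm => hω (psupp_conjR_subset_AR Y g hu i0 hm)),
        fix_of_not_mem_psupp (fun hm => hω (psupp_conjR_subset_AR Y g hv i0 hm))]
  have := congrArg (fun z => g i0 * z * (g i0)⁻¹) hc
  simpa [conjR, mul_assoc] using this

end PPsec


section ClosureSec

open Equiv

lemma symOn_mapsTo {S : Set ℕ} {f : Perm ℕ} (h : f ∈ symOn S) {ω : ℕ} (hω : ω ∈ S) :
    f ω ∈ S :=
  mapsTo_of_psupp_subset (psupp_subset_of_mem_symOn h) hω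

lemma closure_psupp_subset {X : Set (Perm ℕ)} {h : Perm ℕ} (hh : h ∈ Subgroup.closure X) :
    psupp h ⊆ ssupp X := by
  induction hh using Subgroup.closure_induction with
  | mem x hx => exact psupp_subset_ssupp hx
  | one => rw [psupp_one]; exact Set.empty_subset _
  | mul x y hx hy ihx ihy => exact (psupp_mul_subset x y).trans (Set.union_subset ihx ihy)
  | inv x hx ihx => rw [psupp_inv]; exact ihx

lemma setStab_conj_closure {X : Set (Perm ℕ)} {n' : Perm ℕ} (hn : n' ∈ setStab X)
    {d : Perm ℕ} (hd : d ∈ Subgroup.closure X) :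
    n'⁻¹ * d * n' ∈ Subgroup.closure X := by
  induction hd using Subgroup.closure_induction with
  | mem x hx => exact Subgroup.subset_closure (conjR_mem hn hx)
  | one => simpa using Subgroup.one_mem _
  | mul x y hx hy ihx ihy =>
    have : n'⁻¹ * (x * y) * n' = (n'⁻¹ * x * n') * (n'⁻¹ * y * n') := by group
    rw [this]; exact Subgroup.mul_mem _ ihx ihy
  | inv x hx ihx =>
    have : n'⁻¹ * x⁻¹ * n' = (n'⁻¹ * x * n')⁻¹ := by group
    rw [this]; exact Subgroup.inv_mem _ ihx

variable (Y : Set (Perm ℕ)) {s : ℕ} (g : Fin s → Perm ℕ)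
  (hd : ∀ i j : Fin s, i ≠ j → Disjoint (AR Y g i) (AR Y g j))
  (D : Set (Perm ℕ)) (hD : D = PP g '' Y)

include hd hD

lemma PP_mem_closureD {h : Perm ℕ} (hh : h ∈ Subgroup.closure Y) :
    PP g h ∈ Subgroup.closure D := by
  induction hh using Subgroup.closure_induction with
  | mem x hx => exact Subgroup.subset_closure (by rw [hD]; exact Set.mem_image_of_mem _ hx)
  | one => rw [PP_one]; exact Subgroup.one_mem _
  | mul x y hx hy ihx ihy =>
    rw [PP_mul Y g hd (closure_psupp_subset hx) (closure_psupp_subset hy)]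
    exact Subgroup.mul_mem _ ihx ihy
  | inv x hx ihx =>
    rw [PP_inv Y g hd (closure_psupp_subset hx)]
    exact Subgroup.inv_mem _ ihx

lemma exists_PP_of_mem_closureD {d : Perm ℕ} (hdD : d ∈ Subgroup.closure D) :
    ∃ h ∈ Subgroup.closure Y, PP g h = d := by
  induction hdD using Subgroup.closure_induction with
  | mem x hx =>
    rw [hD] at hx
    obtain ⟨y, hy, rfl⟩ := hx
    exact ⟨y, Subgroup.subset_closure hy, rfl⟩
  | one => exact ⟨1, Subgroup.one_mem _, PP_one g⟩
  | mul x y hx hy ihx ihy =>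
    obtain ⟨a, ha, rfl⟩ := ihx
    obtain ⟨b, hb, rfl⟩ := ihy
    exact ⟨a * b, Subgroup.mul_mem _ ha hb,
      PP_mul Y g hd (closure_psupp_subset ha) (closure_psupp_subset hb)⟩
  | inv x hx ihx =>
    obtain ⟨a, ha, rfl⟩ := ihx
    exact ⟨a⁻¹, Subgroup.inv_mem _ ha, PP_inv Y g hd (closure_psupp_subset ha)⟩

lemma AR_subset_ssuppD (i : Fin s) : AR Y g i ⊆ ssupp D := by
  intro ω hω
  have hω' := hω
  rw [mem_AR, mem_ssupp] at hω'
  obtain ⟨x, hx, hmem⟩ := hω'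
  refine mem_ssupp.mpr ⟨PP g x, by rw [hD]; exact Set.mem_image_of_mem _ hx, ?_⟩
  rw [mem_psupp, PP_apply_mem Y g hd (psupp_subset_ssupp hx) hω]
  intro hc
  have := congrArg (g i) hc
  rw [Perm.apply_inv_self] at this
  exact hmem this

omit hd in
lemma ssuppD_subset_iUnion : ssupp D ⊆ ⋃ i, AR Y g i := by
  intro ω hω
  rw [mem_ssupp] at hω
  obtain ⟨z, hz, hmem⟩ := hω
  rw [hD] at hz
  obtain ⟨x, hx, rfl⟩ := hz
  exact psupp_PP_subset Y g (psupp_subset_ssupp hx) hmem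

end ClosureSec


section OrbitSec

open Equiv
open scoped Classical

/-- Orbit equivalence relation of `⟨Y⟩` on `ℕ`. -/
def oS (Y : Set (Perm ℕ)) : Setoid ℕ where
  r a b := ∃ h ∈ Subgroup.closure Y, h a = b
  iseqv := by
    constructor
    · exact fun a => ⟨1, Subgroup.one_mem _, rfl⟩
    · rintro a b ⟨h, hm, rfl⟩
      exact ⟨h⁻¹, Subgroup.inv_mem _ hm, Perm.inv_apply_self h a⟩
    · rintro a b c ⟨h, hm, rfl⟩ ⟨h', hm', rfl⟩
      exact ⟨h' * h, Subgroup.mul_mem _ hm' hm, Perm.mul_apply h' h a⟩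

lemma oS_rel_mem {Y : Set (Perm ℕ)} {a b : ℕ} (h : (oS Y).r a b) (ha : a ∈ ssupp Y) :
    b ∈ ssupp Y := by
  obtain ⟨h, hm, rfl⟩ := h
  exact mapsTo_of_psupp_subset (closure_psupp_subset hm) ha

lemma oS_rel_of_fix {Y : Set (Perm ℕ)} {a b : ℕ} (h : (oS Y).r a b) (ha : a ∉ ssupp Y) :
    b = a := by
  obtain ⟨h, hm, rfl⟩ := h
  exact fix_of_not_mem_psupp fun hc => ha (closure_psupp_subset hm hc)

variable (Y : Set (Perm ℕ)) {s : ℕ} (g : Fin s → Perm ℕ)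

/-- Projection from the regions back to `ssupp Y`. -/
noncomputable def projn (ω : ℕ) : ℕ :=
  if h : ∃ j, ω ∈ AR Y g j then g h.choose ω else ω

variable (hd : ∀ i j : Fin s, i ≠ j → Disjoint (AR Y g i) (AR Y g j))

include hd in
lemma projn_spec {ω : ℕ} {j : Fin s} (hj : ω ∈ AR Y g j) : projn Y g ω = g j ω := by
  have hex : ∃ j, ω ∈ AR Y g j := ⟨j, hj⟩
  rw [projn, dif_pos hex]
  rw [AR_unique Y g hd hex.choose_spec hj]

variable (D : Set (Perm ℕ)) (hD : D = PP g '' Y) (n' : Perm ℕ)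
  (hn1 : n' ∈ symOn (ssupp D)) (hn2 : n' ∈ setStab D)

include hd hD hn1 hn2

/-- The region hit by `n'` on the `i`-th copy of the orbit of `c`. -/
noncomputable def regF (i : Fin s) (c : ℕ) : Fin s :=
  if h : ∃ j, n' ((g i)⁻¹ c) ∈ AR Y g j then h.choose else i

lemma regF_exists {i : Fin s} {c : ℕ} (hc : c ∈ ssupp Y) :
    ∃ j, n' ((g i)⁻¹ c) ∈ AR Y g j := by
  have h1 : (g i)⁻¹ c ∈ AR Y g i := by
    rw [mem_AR, Perm.apply_inv_self]; exact hc
  have h2 : (g i)⁻¹ c ∈ ssupp D := AR_subset_ssuppD Y g hd D hD i h1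
  have h3 : n' ((g i)⁻¹ c) ∈ ssupp D := symOn_mapsTo hn1 h2
  have h4 := ssuppD_subset_iUnion Y g D hD h3
  rwa [Set.mem_iUnion] at h4

lemma regF_spec {i : Fin s} {c : ℕ} (hc : c ∈ ssupp Y) :
    n' ((g i)⁻¹ c) ∈ AR Y g (regF Y g n' i c) := by
  have hex := regF_exists Y g hd D hD n' hn1 hn2 (i := i) hc
  rw [regF, dif_pos hex]
  exact hex.choose_spec

lemma key_invariance {c c' : ℕ} (hc : c ∈ ssupp Y) (hrel : (oS Y).r c c') {i j : Fin s}
    (hj : n' ((g i)⁻¹ c) ∈ AR Y g j) :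
    n' ((g i)⁻¹ c') ∈ AR Y g j ∧
      (oS Y).r (g j (n' ((g i)⁻¹ c))) (g j (n' ((g i)⁻¹ c'))) := by
  obtain ⟨h, hm, rfl⟩ := hrel
  have hω : (g i)⁻¹ c ∈ AR Y g i := by
    rw [mem_AR, Perm.apply_inv_self]; exact hc
  have hPP : (g i)⁻¹ (h c) = PP g h ((g i)⁻¹ c) := by
    rw [PP_apply_mem Y g hd (closure_psupp_subset hm) hω, Perm.apply_inv_self]
  have hconj : n' * PP g h * n'⁻¹ ∈ Subgroup.closure D := by
    have := setStab_conj_closure ((setStab D).inv_mem hn2)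
      (PP_mem_closureD Y g hd D hD hm)
    rwa [inv_inv] at this
  obtain ⟨h₂, hm₂, hPP₂⟩ := exists_PP_of_mem_closureD Y g hd D hD hconj
  have heq : n' ((g i)⁻¹ (h c)) = PP g h₂ (n' ((g i)⁻¹ c)) := by
    rw [hPP, hPP₂]
    simp [Perm.mul_apply]
  constructor
  · rw [heq]
    exact PP_mem_AR Y g hd (closure_psupp_subset hm₂) hj
  · refine ⟨h₂, hm₂, ?_⟩
    rw [heq, PP_apply_mem Y g hd (closure_psupp_subset hm₂) hj, Perm.apply_inv_self]

lemma regF_constant {c c' : ℕ} (hc : c ∈ ssupp Y) (hrel : (oS Y).r c c') (i : Fin s) :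
    regF Y g n' i c = regF Y g n' i c' := by
  have hc' : c' ∈ ssupp Y := oS_rel_mem hrel hc
  have h1 := regF_spec Y g hd D hD n' hn1 hn2 (i := i) hc
  have h2 := (key_invariance Y g hd D hD n' hn1 hn2 hc hrel h1).1
  exact AR_unique Y g hd (regF_spec Y g hd D hD n' hn1 hn2 (i := i) hc') h2 |>.symm

/-- The target orbit function, before descending to the quotient. -/
noncomputable def tgtF (i : Fin s) (c : ℕ) : Quotient (oS Y) :=
  Quotient.mk (oS Y) (if c ∈ ssupp Y then projn Y g (n' ((g i)⁻¹ c)) else c)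

lemma tgtF_sound (i : Fin s) {c c' : ℕ} (hrel : (oS Y).r c c') :
    tgtF Y g n' i c = tgtF Y g n' i c' := by
  by_cases hc : c ∈ ssupp Y
  · have hc' : c' ∈ ssupp Y := oS_rel_mem hrel hc
    have h1 := regF_spec Y g hd D hD n' hn1 hn2 (i := i) hc
    have h2 := key_invariance Y g hd D hD n' hn1 hn2 hc hrel h1
    rw [tgtF, tgtF, if_pos hc, if_pos hc',
      projn_spec Y g hd h1, projn_spec Y g hd h2.1]
    exact Quotient.sound h2.2
  · have := oS_rel_of_fix hrel hc
    rw [this]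

/-- The target orbit map on the quotient. -/
noncomputable def tgt (i : Fin s) : Quotient (oS Y) → Quotient (oS Y) :=
  Quotient.lift (tgtF Y g n' i)
    (fun _ _ h => tgtF_sound Y g hd D hD n' hn1 hn2 i h)

lemma tgt_mk {c : ℕ} (hc : c ∈ ssupp Y) (i : Fin s) :
    tgt Y g hd D hD n' hn1 hn2 i (Quotient.mk (oS Y) c) =
      Quotient.mk (oS Y) (g (regF Y g n' i c) (n' ((g i)⁻¹ c))) := by
  show tgtF Y g n' i c = _
  rw [tgtF, if_pos hc, projn_spec Y g hd (regF_spec Y g hd D hD n' hn1 hn2 hc)]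

end OrbitSec


section NuSec

open Equiv
open scoped Classical

variable (Y : Set (Perm ℕ)) {s : ℕ} (g : Fin s → Perm ℕ)
  (hd : ∀ i j : Fin s, i ≠ j → Disjoint (AR Y g i) (AR Y g j))
  (D : Set (Perm ℕ)) (hD : D = PP g '' Y) (n' : Perm ℕ)
  (hn1 : n' ∈ symOn (ssupp D)) (hn2 : n' ∈ setStab D)

/-- The reassembled permutation of `ssupp Y`, given a choice `ich` of a source copy
for each orbit. -/
noncomputable def nuF (ich : Quotient (oS Y) → Fin s) (c : ℕ) : ℕ :=
  if hc : c ∈ ssupp Y then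
    g (regF Y g n' (ich (Quotient.mk (oS Y) c)) c)
      (n' ((g (ich (Quotient.mk (oS Y) c)))⁻¹ c))
  else c

variable (ich : Quotient (oS Y) → Fin s)

lemma nuF_pos {c : ℕ} (hc : c ∈ ssupp Y) :
    nuF Y g n' ich c =
      g (regF Y g n' (ich (Quotient.mk (oS Y) c)) c)
        (n' ((g (ich (Quotient.mk (oS Y) c)))⁻¹ c)) := dif_pos hc

lemma nuF_neg {c : ℕ} (hc : c ∉ ssupp Y) : nuF Y g n' ich c = c := dif_neg hc

include hd hD hn1 hn2

lemma nuF_mem {c : ℕ} (hc : c ∈ ssupp Y) : nuF Y g n' ich c ∈ ssupp Y := by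
  rw [nuF_pos Y g n' ich hc]
  have := regF_spec Y g hd D hD n' hn1 hn2 (i := ich (Quotient.mk (oS Y) c)) hc
  exact this

lemma nuF_class {c : ℕ} (hc : c ∈ ssupp Y) :
    Quotient.mk (oS Y) (nuF Y g n' ich c) =
      tgt Y g hd D hD n' hn1 hn2 (ich (Quotient.mk (oS Y) c)) (Quotient.mk (oS Y) c) := by
  rw [nuF_pos Y g n' ich hc, tgt_mk Y g hd D hD n' hn1 hn2 hc]

lemma nuF_inj
    (hinj : ∀ c c₁ : ℕ, c ∈ ssupp Y → c₁ ∈ ssupp Y →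
      tgt Y g hd D hD n' hn1 hn2 (ich (Quotient.mk (oS Y) c)) (Quotient.mk (oS Y) c) =
        tgt Y g hd D hD n' hn1 hn2 (ich (Quotient.mk (oS Y) c₁)) (Quotient.mk (oS Y) c₁) →
      Quotient.mk (oS Y) c = Quotient.mk (oS Y) c₁) :
    Function.Injective (nuF Y g n' ich) := by
  intro c c₁ he
  by_cases hc : c ∈ ssupp Y <;> by_cases hc₁ : c₁ ∈ ssupp Y
  · have hcl : Quotient.mk (oS Y) c = Quotient.mk (oS Y) c₁ := by
      apply hinj c c₁ hc hc₁
      rw [← nuF_class Y g hd D hD n' hn1 hn2 ich hc,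
        ← nuF_class Y g hd D hD n' hn1 hn2 ich hc₁, he]
    have hieq : ich (Quotient.mk (oS Y) c₁) = ich (Quotient.mk (oS Y) c) :=
      congrArg ich hcl.symm
    have hreg : regF Y g n' (ich (Quotient.mk (oS Y) c)) c₁ =
        regF Y g n' (ich (Quotient.mk (oS Y) c)) c :=
      (regF_constant Y g hd D hD n' hn1 hn2 hc (Quotient.exact hcl) _).symm
    rw [nuF_pos Y g n' ich hc, nuF_pos Y g n' ich hc₁, hieq, hreg] at he
    have h1 := (g (regF Y g n' (ich (Quotient.mk (oS Y) c)) c)).injective he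
    have h2 := n'.injective h1
    exact ((g (ich (Quotient.mk (oS Y) c)))⁻¹).injective h2
  · exfalso
    apply hc₁
    rw [← nuF_neg Y g n' ich hc₁, ← he]
    exact nuF_mem Y g hd D hD n' hn1 hn2 ich hc
  · exfalso
    apply hc
    rw [← nuF_neg Y g n' ich hc, he]
    exact nuF_mem Y g hd D hD n' hn1 hn2 ich hc₁
  · rw [nuF_neg Y g n' ich hc, nuF_neg Y g n' ich hc₁] at he
    exact he

lemma nuF_intertwine (σ : Perm ℕ → Perm ℕ) (hσY : ∀ x ∈ Y, σ x ∈ Y)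
    (hσ : ∀ x ∈ Y, n'⁻¹ * PP g x * n' = PP g (σ x)) {x : Perm ℕ} (hx : x ∈ Y) (c : ℕ) :
    nuF Y g n' ich (σ x c) = x (nuF Y g n' ich c) := by
  by_cases hc : c ∈ ssupp Y
  · have hσxY := hσY x hx
    have hrel : (oS Y).r c (σ x c) := ⟨σ x, Subgroup.subset_closure hσxY, rfl⟩
    have hcσ : σ x c ∈ ssupp Y := oS_rel_mem hrel hc
    have hq : Quotient.mk (oS Y) (σ x c) = Quotient.mk (oS Y) c :=
      (Quotient.sound hrel).symm
    set i := ich (Quotient.mk (oS Y) c) with hi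
    set j := regF Y g n' i c with hj
    have hjσ : regF Y g n' i (σ x c) = j :=
      (regF_constant Y g hd D hD n' hn1 hn2 hc hrel i).symm
    have hARi : (g i)⁻¹ c ∈ AR Y g i := by
      rw [mem_AR, Perm.apply_inv_self]; exact hc
    have hARj : n' ((g i)⁻¹ c) ∈ AR Y g j := regF_spec Y g hd D hD n' hn1 hn2 hc
    -- `(g i)⁻¹ (σ x c) = PP g (σ x) ((g i)⁻¹ c)`
    have e1 : (g i)⁻¹ (σ x c) = PP g (σ x) ((g i)⁻¹ c) := by
      rw [PP_apply_mem Y g hd (psupp_subset_ssupp hσxY) hARi, Perm.apply_inv_self]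
    -- `n' ∘ PP g (σ x) = PP g x ∘ n'`
    have e2 : n' (PP g (σ x) ((g i)⁻¹ c)) = PP g x (n' ((g i)⁻¹ c)) := by
      have := hσ x hx
      have h3 : n' * PP g (σ x) = PP g x * n' := by
        rw [← this]; group
      calc n' (PP g (σ x) ((g i)⁻¹ c)) = (n' * PP g (σ x)) ((g i)⁻¹ c) := rfl
        _ = (PP g x * n') ((g i)⁻¹ c) := by rw [h3]
        _ = PP g x (n' ((g i)⁻¹ c)) := rfl
    -- compute
    rw [nuF_pos Y g n' ich hcσ, nuF_pos Y g n' ich hc]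
    rw [hq, ← hi, hjσ, ← hj, e1, e2,
      PP_apply_mem Y g hd (psupp_subset_ssupp hx) hARj, Perm.apply_inv_self]
  · have h1 : σ x c = c := fix_of_not_mem_psupp
      (fun hm => hc (psupp_subset_ssupp (hσY x hx) hm))
    have h2 : nuF Y g n' ich c = c := nuF_neg Y g n' ich hc
    rw [h1, h2, fix_of_not_mem_psupp (fun hm => hc (psupp_subset_ssupp hx hm))]

end NuSec


section TgtInjSec

open Equiv

variable (Y : Set (Perm ℕ)) {s : ℕ} (g : Fin s → Perm ℕ)
  (hd : ∀ i j : Fin s, i ≠ j → Disjoint (AR Y g i) (AR Y g j))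
  (D : Set (Perm ℕ)) (hD : D = PP g '' Y) (n' : Perm ℕ)
  (hn1 : n' ∈ symOn (ssupp D)) (hn2 : n' ∈ setStab D)

include hd hD hn1 hn2

lemma tgt_reg_inj {c c' : ℕ} (hc : c ∈ ssupp Y) (hc' : c' ∈ ssupp Y) {i i' : Fin s}
    (hreg : regF Y g n' i c = regF Y g n' i' c')
    (htgt : tgt Y g hd D hD n' hn1 hn2 i (Quotient.mk (oS Y) c) =
      tgt Y g hd D hD n' hn1 hn2 i' (Quotient.mk (oS Y) c')) :
    i = i' ∧ Quotient.mk (oS Y) c = Quotient.mk (oS Y) c' := by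
  set j := regF Y g n' i c with hjdef
  have hj : n' ((g i)⁻¹ c) ∈ AR Y g j := regF_spec Y g hd D hD n' hn1 hn2 hc
  have hj' : n' ((g i')⁻¹ c') ∈ AR Y g j := by
    rw [hreg]
    exact regF_spec Y g hd D hD n' hn1 hn2 hc'
  rw [tgt_mk Y g hd D hD n' hn1 hn2 hc i, tgt_mk Y g hd D hD n' hn1 hn2 hc' i',
    ← hjdef, ← hreg] at htgt
  have hrel : (oS Y).r (g j (n' ((g i)⁻¹ c))) (g j (n' ((g i')⁻¹ c'))) :=
    Quotient.exact htgt
  obtain ⟨h₂, hm₂, he₂⟩ := hrel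
  have hω' : n' ((g i')⁻¹ c') = PP g h₂ (n' ((g i)⁻¹ c)) := by
    rw [PP_apply_mem Y g hd (closure_psupp_subset hm₂) hj]
    apply (g j).injective
    rw [Perm.apply_inv_self, he₂]
  have hconj : n'⁻¹ * PP g h₂ * n' ∈ Subgroup.closure D :=
    setStab_conj_closure hn2 (PP_mem_closureD Y g hd D hD hm₂)
  obtain ⟨h₃, hm₃, he₃⟩ := exists_PP_of_mem_closureD Y g hd D hD hconj
  have hstep : (g i')⁻¹ c' = PP g h₃ ((g i)⁻¹ c) := by
    apply n'.injective
    rw [hω', he₃]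
    show PP g h₂ (n' ((g i)⁻¹ c)) = (n' * (n'⁻¹ * PP g h₂ * n')) ((g i)⁻¹ c)
    have hcm : n' * (n'⁻¹ * PP g h₂ * n') = PP g h₂ * n' := by group
    rw [hcm]
    rfl
  have hARi : (g i)⁻¹ c ∈ AR Y g i := by
    rw [mem_AR, Perm.apply_inv_self]; exact hc
  have hARi' : (g i')⁻¹ c' ∈ AR Y g i' := by
    rw [mem_AR, Perm.apply_inv_self]; exact hc'
  have hmem : (g i')⁻¹ c' ∈ AR Y g i := by
    rw [hstep]
    exact PP_mem_AR Y g hd (closure_psupp_subset hm₃) hARi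
  have hii : i = i' := AR_unique Y g hd hmem hARi'
  subst hii
  refine ⟨rfl, Quotient.sound ⟨h₃, hm₃, ?_⟩⟩
  have h4 := congrArg (g i) hstep
  rw [PP_apply_mem Y g hd (closure_psupp_subset hm₃) hARi] at h4
  simp only [Perm.apply_inv_self] at h4
  exact h4.symm

end TgtInjSec


section RealizerSec

open Equiv
open scoped Classical

variable (Y : Set (Perm ℕ)) {s : ℕ} (g : Fin s → Perm ℕ)
  (hd : ∀ i j : Fin s, i ≠ j → Disjoint (AR Y g i) (AR Y g j))
  (D : Set (Perm ℕ)) (hD : D = PP g '' Y) (n' : Perm ℕ)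
  (hn1 : n' ∈ symOn (ssupp D)) (hn2 : n' ∈ setStab D)

/-- The region function on the quotient. -/
noncomputable def regQ (i : Fin s) : Quotient (oS Y) → Fin s :=
  Quotient.lift (regF Y g n' i) (fun c c' h => by
    by_cases hc : c ∈ ssupp Y
    · exact regF_constant Y g hd D hD n' hn1 hn2 hc h i
    · rw [oS_rel_of_fix h hc])

include hd hD hn1 hn2 in
lemma exists_conj_realizer (hs : 1 ≤ s) (hfin : (ssupp Y).Finite)
    (σ : Perm ℕ → Perm ℕ) (hσY : ∀ x ∈ Y, σ x ∈ Y)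
    (hσ : ∀ x ∈ Y, n'⁻¹ * PP g x * n' = PP g (σ x))
    (hσsurj : ∀ y ∈ Y, ∃ x ∈ Y, σ x = y) :
    ∃ n : Perm ℕ, n ∈ NX Y ∧ ∀ x ∈ Y, n⁻¹ * x * n = σ x := by
  classical
  set K : Finset (Quotient (oS Y)) := hfin.toFinset.image (Quotient.mk (oS Y)) with hK
  have memK : ∀ {c : ℕ}, c ∈ ssupp Y → Quotient.mk (oS Y) c ∈ K := by
    intro c hc
    exact Finset.mem_image_of_mem _ (hfin.mem_toFinset.mpr hc)
  set t : {k // k ∈ K} → Finset (Quotient (oS Y)) :=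
    fun k => Finset.univ.image
      (fun i : Fin s => tgt Y g hd D hD n' hn1 hn2 i k.val) with htdef
  have hall : ∀ A : Finset {k // k ∈ K}, A.card ≤ (A.biUnion t).card := by
    intro A
    have hs0 : 0 < s := hs
    have hcard : ((Finset.univ : Finset (Fin s)) ×ˢ A).card ≤
        ((Finset.univ : Finset (Fin s)) ×ˢ (A.biUnion t)).card := by
      apply Finset.card_le_card_of_injOn
        (fun p => (regQ Y g hd D hD n' hn1 hn2 p.1 p.2.1,
          tgt Y g hd D hD n' hn1 hn2 p.1 p.2.1))
      · rintro ⟨i, k⟩ hp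
        rw [Finset.mem_coe, Finset.mem_product] at hp ⊢
        refine ⟨Finset.mem_univ _, ?_⟩
        apply Finset.mem_biUnion.mpr
        refine ⟨k, hp.2, ?_⟩
        rw [htdef]
        exact Finset.mem_image.mpr ⟨i, Finset.mem_univ i, rfl⟩
      · rintro ⟨i, k⟩ hp ⟨i', k'⟩ hp' hfe
        obtain ⟨c, hcmem, hck⟩ := Finset.mem_image.mp k.2
        obtain ⟨c', hcmem', hck'⟩ := Finset.mem_image.mp k'.2
        have hc : c ∈ ssupp Y := hfin.mem_toFinset.mp hcmem
        have hc' : c' ∈ ssupp Y := hfin.mem_toFinset.mp hcmem'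
        have hfe1 := congrArg Prod.fst hfe
        have hfe2 := congrArg Prod.snd hfe
        simp only at hfe1 hfe2
        rw [← hck, ← hck'] at hfe1 hfe2
        have hreg : regF Y g n' i c = regF Y g n' i' c' := hfe1
        have htg : tgt Y g hd D hD n' hn1 hn2 i (Quotient.mk (oS Y) c) =
            tgt Y g hd D hD n' hn1 hn2 i' (Quotient.mk (oS Y) c') := hfe2
        obtain ⟨hii, hcc⟩ := tgt_reg_inj Y g hd D hD n' hn1 hn2 hc hc' hreg htg
        have hkk : k = k' := Subtype.ext (by rw [← hck, ← hck', hcc])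
        simp [hii, hkk]
    rw [Finset.card_product, Finset.card_product, Finset.card_univ,
      Fintype.card_fin] at hcard
    exact Nat.le_of_mul_le_mul_left hcard hs0
  obtain ⟨δ, hδinj, hδmem⟩ :=
    (Finset.all_card_le_biUnion_card_iff_exists_injective t).mp hall
  have hich0 : ∀ k : {k // k ∈ K},
      ∃ i : Fin s, tgt Y g hd D hD n' hn1 hn2 i k.val = δ k := by
    intro k
    have h := hδmem k
    rw [htdef] at h
    obtain ⟨i, -, hi⟩ := Finset.mem_image.mp h
    exact ⟨i, hi⟩
  choose ich0 hich0spec using hich0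
  set ichq : Quotient (oS Y) → Fin s :=
    fun q => if h : q ∈ K then ich0 ⟨q, h⟩ else ⟨0, hs⟩ with hichq
  have hichq_mk : ∀ {c : ℕ} (hc : c ∈ ssupp Y),
      ichq (Quotient.mk (oS Y) c) = ich0 ⟨Quotient.mk (oS Y) c, memK hc⟩ := by
    intro c hc
    rw [hichq]
    exact dif_pos (memK hc)
  have hinj : ∀ c c₁ : ℕ, c ∈ ssupp Y → c₁ ∈ ssupp Y →
      tgt Y g hd D hD n' hn1 hn2 (ichq (Quotient.mk (oS Y) c)) (Quotient.mk (oS Y) c) =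
        tgt Y g hd D hD n' hn1 hn2 (ichq (Quotient.mk (oS Y) c₁)) (Quotient.mk (oS Y) c₁) →
      Quotient.mk (oS Y) c = Quotient.mk (oS Y) c₁ := by
    intro c c₁ hc hc₁ he
    rw [hichq_mk hc, hichq_mk hc₁, hich0spec ⟨_, memK hc⟩, hich0spec ⟨_, memK hc₁⟩] at he
    have := hδinj he
    exact congrArg Subtype.val this
  have hbij : Function.Bijective (nuF Y g n' ichq) := by
    constructor
    · exact nuF_inj Y g hd D hD n' hn1 hn2 ichq hinj
    · intro v
      by_cases hv : v ∈ ssupp Y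
      · have hmaps : Set.MapsTo (nuF Y g n' ichq) (ssupp Y) (ssupp Y) :=
          fun c hc => nuF_mem Y g hd D hD n' hn1 hn2 ichq hc
        have hbijOn := (hfin.injOn_iff_bijOn_of_mapsTo hmaps).mp
          ((nuF_inj Y g hd D hD n' hn1 hn2 ichq hinj).injOn)
        obtain ⟨c, -, hcv⟩ := hbijOn.surjOn hv
        exact ⟨c, hcv⟩
      · exact ⟨v, nuF_neg Y g n' ichq hv⟩
  set n : Perm ℕ := Equiv.ofBijective (nuF Y g n' ichq) hbij with hnn
  have hnapp : ∀ c, n c = nuF Y g n' ichq c := fun c => rfl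
  have hcomm : ∀ x ∈ Y, n * σ x = x * n := by
    intro x hx
    apply Equiv.ext
    intro c
    rw [Perm.mul_apply, Perm.mul_apply, hnapp, hnapp]
    exact nuF_intertwine Y g hd D hD n' hn1 hn2 ichq σ hσY hσ hx c
  have hconj : ∀ x ∈ Y, n⁻¹ * x * n = σ x := by
    intro x hx
    have h := hcomm x hx
    calc n⁻¹ * x * n = n⁻¹ * (x * n) := by group
      _ = n⁻¹ * (n * σ x) := by rw [← h]
      _ = σ x := by group
  have hsym : n ∈ symOn (ssupp Y) := by
    intro ω hω
    rw [hnapp]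
    exact nuF_neg Y g n' ichq hω
  have hstab : n ∈ setStab Y := by
    intro x
    constructor
    · intro hx
      rw [hconj x hx]
      exact hσY x hx
    · intro hx
      obtain ⟨y', hy', hyy⟩ := hσsurj (n⁻¹ * x * n) hx
      have h2 := hconj y' hy'
      rw [hyy] at h2
      have h3 : n⁻¹ * y' = n⁻¹ * x := mul_right_cancel h2
      have h4 : y' = x := mul_left_cancel h3
      rwa [← h4]
  exact ⟨n, Subgroup.mem_inf.mpr ⟨hsym, hstab⟩, hconj⟩

end RealizerSec


section EasySec

open Equiv

variable (Y : Set (Perm ℕ)) {s : ℕ} (g : Fin s → Perm ℕ)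
  (hd : ∀ i j : Fin s, i ≠ j → Disjoint (AR Y g i) (AR Y g j))
  (D : Set (Perm ℕ)) (hD : D = PP g '' Y)

include hd in
lemma PP_conj_formula {u v : Perm ℕ} (hu : psupp u ⊆ ssupp Y) (hv : psupp v ⊆ ssupp Y) :
    PP g (u * v * u⁻¹) = PP g u * PP g v * (PP g u)⁻¹ := by
  have huv : psupp (u * v) ⊆ ssupp Y := (psupp_mul_subset u v).trans
    (Set.union_subset hu hv)
  have hui : psupp u⁻¹ ⊆ ssupp Y := by rw [psupp_inv]; exact hu
  rw [PP_mul Y g hd huv hui, PP_mul Y g hd hu hv, PP_inv Y g hd hu]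

include hd hD in
lemma PP_mem_NX {n : Perm ℕ} (hn : n ∈ NX Y) : PP g n ∈ NX D := by
  obtain ⟨hsym, hstab⟩ := Subgroup.mem_inf.mp hn
  have hnsupp : psupp n ⊆ ssupp Y := psupp_subset_of_mem_symOn hsym
  apply Subgroup.mem_inf.mpr
  constructor
  · apply mem_symOn_of_psupp_subset
    intro ω hω
    have h1 := psupp_PP_subset Y g hnsupp hω
    rw [Set.mem_iUnion] at h1
    obtain ⟨i, hi⟩ := h1
    exact AR_subset_ssuppD Y g hd D hD i hi
  · intro z
    constructor
    · intro hz
      rw [hD] at hz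
      obtain ⟨x, hx, rfl⟩ := hz
      have hxsupp : psupp x ⊆ ssupp Y := psupp_subset_ssupp hx
      have e : (PP g n)⁻¹ * PP g x * PP g n = PP g (n⁻¹ * x * n) := by
        have := PP_conj_formula Y g hd (by rw [psupp_inv]; exact hnsupp) hxsupp (u := n⁻¹) (v := x)
        rw [inv_inv] at this
        rw [this, PP_inv Y g hd hnsupp, inv_inv]
      rw [e, hD]
      exact Set.mem_image_of_mem _ (conjR_mem hstab hx)
    · intro hz
      rw [hD] at hz
      obtain ⟨x, hx, he⟩ := hz
      have hxsupp : psupp x ⊆ ssupp Y := psupp_subset_ssupp hx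
      have hz' : z = PP g n * PP g x * (PP g n)⁻¹ := by
        rw [he]; group
      rw [hz', ← PP_conj_formula Y g hd hnsupp hxsupp, hD]
      exact Set.mem_image_of_mem _ (conjL_mem hstab hx)

end EasySec

/-- For irreducible `Y ∈ 𝓢^q` and `s ≥ 1`, the pair `(M_{Δ^s Y}, Δ^s Y)` is permutation
isomorphic to `(M_Y, Y)`: there are a group isomorphism `φ : M_Y ≃* M_{Δ^s Y}` and a
bijection `τ : Y ≃ Δ^s Y`, given by `y ↦ y y^{g₂} ⋯ y^{g_s}`, with
`τ(y^m) = τ(y)^{φ(m)}` for all `y ∈ Y`, `m ∈ M_Y`. -/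
theorem stmt_5 (q : ℕ) (hq : 2 ≤ q) (Y : Set (Equiv.Perm ℕ)) (hY : memS q Y)
    (hirr : IsIrred Y) (s : ℕ) (hs : 1 ≤ s)
    (g : Fin s → Equiv.Perm ℕ)
    (hdisj : ∀ i j, i ≠ j → Disjoint (ssupp (conjSet (g i) Y)) (ssupp (conjSet (g j) Y)))
    (D : Set (Equiv.Perm ℕ))
    (hD : D = (fun x => (List.ofFn fun i => conjR (g i) x).prod) '' Y) :
    ∃ (φ : MX Y ≃* MX D) (τ : Y ≃ D),
      (∀ y : Y, (τ y : Equiv.Perm ℕ) = (List.ofFn fun i => conjR (g i) (y : Equiv.Perm ℕ)).prod) ∧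
      ∀ (y : Y) (m : MX Y), τ (m • y) = (φ m) • (τ y) := by
  classical
  have hdA : ∀ i j : Fin s, i ≠ j → Disjoint (AR Y g i) (AR Y g j) := by
    intro i j hij
    rw [AR_eq_ssupp_conjSet, AR_eq_ssupp_conjSet]
    exact hdisj i j hij
  have hfin : (ssupp Y).Finite :=
    Set.Finite.biUnion hY.1.1 (fun ρ hρ => hY.1.2.2.2 ρ hρ)
  have hD' : D = PP g '' Y := hD
  have hmemD : ∀ z : Equiv.Perm ℕ, z ∈ D ↔ ∃ x ∈ Y, PP g x = z := by
    intro z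
    rw [hD']
    exact Iff.rfl
  -- the bijection τ
  have hPPmem : ∀ y : Y, PP g (y : Equiv.Perm ℕ) ∈ D := fun y => by
    rw [hD']; exact Set.mem_image_of_mem _ y.2
  have hτbij : Function.Bijective
      (fun y : Y => (⟨PP g (y : Equiv.Perm ℕ), hPPmem y⟩ : D)) := by
    constructor
    · intro a b he
      apply Subtype.ext
      exact PP_inj Y g hdA hs (psupp_subset_ssupp a.2) (psupp_subset_ssupp b.2)
        (congrArg Subtype.val he)
    · rintro ⟨d, hd2⟩
      rw [hD'] at hd2
      obtain ⟨x, hx, rfl⟩ := hd2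
      exact ⟨⟨x, hx⟩, rfl⟩
  set τ : Y ≃ D := Equiv.ofBijective _ hτbij with hτ
  have hτval : ∀ y : Y, (τ y : Equiv.Perm ℕ) = PP g (y : Equiv.Perm ℕ) := fun y => rfl
  have hτsymmval : ∀ d : D, PP g ((τ.symm d : Y) : Equiv.Perm ℕ) = (d : Equiv.Perm ℕ) := by
    intro d
    exact congrArg Subtype.val (τ.apply_symm_apply d)
  -- the group isomorphism induced by τ
  set Φ : Equiv.Perm Y ≃* Equiv.Perm D :=
    { toEquiv := τ.permCongr,
      map_mul' := by
        intro p q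
        apply Equiv.ext
        intro d
        simp [Equiv.permCongr_apply] } with hΦ
  have hΦval : ∀ (p : Equiv.Perm Y) (d : D), Φ p d = τ (p (τ.symm d)) := fun p d => rfl
  have hmap : Subgroup.map Φ.toMonoidHom (MX Y) = MX D := by
    apply le_antisymm
    · intro m' hm'
      obtain ⟨m, hm, rfl⟩ := Subgroup.mem_map.mp hm'
      obtain ⟨nn, rfl⟩ := MonoidHom.mem_range.mp hm
      apply MonoidHom.mem_range.mpr
      refine ⟨⟨PP g (nn : Equiv.Perm ℕ), PP_mem_NX Y g hdA D hD' nn.2⟩, ?_⟩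
      apply Equiv.ext
      intro d
      apply Subtype.ext
      have hy := (τ.symm d).2
      have hnn := Subgroup.mem_inf.mp nn.2
      have hnsupp : psupp (nn : Equiv.Perm ℕ) ⊆ ssupp Y :=
        psupp_subset_of_mem_symOn hnn.1
      show PP g (nn : Equiv.Perm ℕ) * (d : Equiv.Perm ℕ) * (PP g (nn : Equiv.Perm ℕ))⁻¹ =
        ((Φ.toMonoidHom (MXhom Y nn)) d : Equiv.Perm ℕ)
      have hrhs : ((Φ.toMonoidHom (MXhom Y nn)) d : Equiv.Perm ℕ) =
          PP g ((nn : Equiv.Perm ℕ) * ((τ.symm d : Y) : Equiv.Perm ℕ) *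
            (nn : Equiv.Perm ℕ)⁻¹) := rfl
      rw [hrhs, PP_conj_formula Y g hdA hnsupp (psupp_subset_ssupp hy), hτsymmval d]
    · intro m' hm'
      obtain ⟨n', rfl⟩ := MonoidHom.mem_range.mp hm'
      have hn12 := Subgroup.mem_inf.mp n'.2
      have hn1 := hn12.1
      have hn2 := hn12.2
      have hσex : ∀ x : Equiv.Perm ℕ, x ∈ Y →
          ∃ y, y ∈ Y ∧ PP g y =
            (n' : Equiv.Perm ℕ)⁻¹ * PP g x * (n' : Equiv.Perm ℕ) := by
        intro x hx
        have h1 : PP g x ∈ D := (hmemD _).mpr ⟨x, hx, rfl⟩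
        have h2 := conjR_mem hn2 h1
        obtain ⟨y, hy, he⟩ := (hmemD _).mp h2
        exact ⟨y, hy, he⟩
      set σ : Equiv.Perm ℕ → Equiv.Perm ℕ :=
        fun x => if hx : x ∈ Y then (hσex x hx).choose else 1 with hσdef
      have hσY : ∀ x ∈ Y, σ x ∈ Y := by
        intro x hx
        rw [hσdef]
        simp only [dif_pos hx]
        exact (hσex x hx).choose_spec.1
      have hσspec : ∀ x ∈ Y,
          (n' : Equiv.Perm ℕ)⁻¹ * PP g x * (n' : Equiv.Perm ℕ) = PP g (σ x) := by
        intro x hx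
        rw [hσdef]
        simp only [dif_pos hx]
        exact ((hσex x hx).choose_spec.2).symm
      have hσsurj : ∀ y ∈ Y, ∃ x ∈ Y, σ x = y := by
        intro y hy
        have h1 : PP g y ∈ D := (hmemD _).mpr ⟨y, hy, rfl⟩
        have h2 := conjL_mem hn2 h1
        obtain ⟨x, hx, he⟩ := (hmemD _).mp h2
        refine ⟨x, hx, ?_⟩
        apply PP_inj Y g hdA hs (psupp_subset_ssupp (hσY x hx)) (psupp_subset_ssupp hy)
        rw [← hσspec x hx, he]
        group
      obtain ⟨n, hnNX, hnconj⟩ := exists_conj_realizer Y g hdA D hD' (n' : Equiv.Perm ℕ)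
        hn1 hn2 hs hfin σ hσY hσspec hσsurj
      apply Subgroup.mem_map.mpr
      refine ⟨MXhom Y ⟨n, hnNX⟩, MonoidHom.mem_range.mpr ⟨⟨n, hnNX⟩, rfl⟩, ?_⟩
      apply Equiv.ext
      intro d
      apply Subtype.ext
      have hy := (τ.symm d).2
      have hstab := (Subgroup.mem_inf.mp hnNX).2
      have hxY : n * ((τ.symm d : Y) : Equiv.Perm ℕ) * n⁻¹ ∈ Y := conjL_mem hstab hy
      have hσeq : σ (n * ((τ.symm d : Y) : Equiv.Perm ℕ) * n⁻¹) =
          ((τ.symm d : Y) : Equiv.Perm ℕ) := by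
        have h1 := hnconj _ hxY
        have h2 : n⁻¹ * (n * ((τ.symm d : Y) : Equiv.Perm ℕ) * n⁻¹) * n =
            ((τ.symm d : Y) : Equiv.Perm ℕ) := by group
        rw [h2] at h1
        exact h1.symm
      show ((Φ.toMonoidHom (MXhom Y ⟨n, hnNX⟩)) d : Equiv.Perm ℕ) =
        (n' : Equiv.Perm ℕ) * (d : Equiv.Perm ℕ) * (n' : Equiv.Perm ℕ)⁻¹
      have hlhs : ((Φ.toMonoidHom (MXhom Y ⟨n, hnNX⟩)) d : Equiv.Perm ℕ) =
          PP g (n * ((τ.symm d : Y) : Equiv.Perm ℕ) * n⁻¹) := rfl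
      have h3 := hσspec _ hxY
      rw [hσeq, hτsymmval d] at h3
      rw [hlhs]
      calc PP g (n * ((τ.symm d : Y) : Equiv.Perm ℕ) * n⁻¹)
          = (n' : Equiv.Perm ℕ) * ((n' : Equiv.Perm ℕ)⁻¹ *
              PP g (n * ((τ.symm d : Y) : Equiv.Perm ℕ) * n⁻¹) *
              (n' : Equiv.Perm ℕ)) * (n' : Equiv.Perm ℕ)⁻¹ := by group
        _ = (n' : Equiv.Perm ℕ) * (d : Equiv.Perm ℕ) * (n' : Equiv.Perm ℕ)⁻¹ := by
            rw [h3]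
  refine ⟨(Φ.subgroupMap (MX Y)).trans (MulEquiv.subgroupCongr hmap), τ, fun y => hτval y, ?_⟩
  intro y m
  show τ ((m : Equiv.Perm Y) y) = (Φ (m : Equiv.Perm Y)) (τ y)
  rw [hΦval, Equiv.symm_apply_apply]

end FPS
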